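/- Volga of the barrier-pricing parameter 𝒜: fix K > 0, T > 0, S > 0, r_d, r_f ∈ ℝ and φ ∈ {1, −1}. For σ > 0 let 𝒜(σ) = φ(S e^{-r_f T} N(φx₁) − K e^{-r_d T} N(φ(x₁ − σ√T))) with x₁ = ln(S/K)/(σ√T) + (1+α)σ√T and α = (r_d − r_f − σ²/2)/σ². Then the second derivative ∂²𝒜/∂σ² exists at every σ > 0 and equals (1/(8√(2π) σ⁵ T^{3/2})) · [ −16Kσ²T(ln(S/K) + T(r_d − r_f)) E_d + 16σ²ST(ln(S/K) + T(r_d − r_f)) E_f + K(2ln(S/K) + T(2r_d − 2r_f − σ²))(2ln(S/K) + T(2r_d − 2r_f + σ²))² E_d − S(2ln(S/K) + T(2r_d − 2r_f − σ²))²(2ln(S/K) + T(2r_d − 2r_f + σ²)) E_f ], where E_d = exp(−(T(−2r_d + 2r_f + σ²) − 2ln(S/K))²/(8σ²T) − r_d T) and E_f = exp(−(2ln(S/K) + T(2r_d − 2r_f + σ²))²/(8σ²T) − r_f T). -/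

import Mathlib

noncomputable def stdNormalCdf (z : ℝ) : ℝ :=
  ∫ x in Set.Iic z, (1 / Real.sqrt (2 * Real.pi)) * Real.exp (-x ^ 2 / 2)

/-!
With `s = √T`, the arguments of `N` are `φ x₊(σ)` and `φ x₋(σ)` with `x± = a/σ ± cσ`,
`a = (ln(S/K) + T(r_d - r_f)) / s` and `c = s/2`. Since `φ² = 1` and the normal density `n` is
even, `∂𝒜/∂σ = S e^{-r_f T} n(x₊) x₊' - K e^{-r_d T} n(x₋) x₋'`, and `n'(x) = -x n(x)` turns this
into `∂²𝒜/∂σ² = S e^{-r_f T} n(x₊) (x₊'' - x₊ x₊'²) - K e^{-r_d T} n(x₋) (x₋'' - x₋ x₋'²)`,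
whose expansion is the closed form.
-/

open Real Filter Topology

noncomputable def stdNormalPdf (z : ℝ) : ℝ := 1 / √(2 * π) * exp (-z ^ 2 / 2)

lemma stdNormalPdf_neg (z : ℝ) : stdNormalPdf (-z) = stdNormalPdf z := by
  simp [stdNormalPdf]

lemma integrable_stdNormalPdf : MeasureTheory.Integrable stdNormalPdf := by
  have h : stdNormalPdf = fun x => 1 / √(2 * π) * exp (-(1 / 2) * x ^ 2) := by
    funext x; simp only [stdNormalPdf]; ring_nf
  rw [h]
  exact (integrable_exp_neg_mul_sq (by norm_num)).const_mul _

lemma continuous_stdNormalPdf : Continuous stdNormalPdf := by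
  unfold stdNormalPdf; fun_prop

lemma hasDerivAt_stdNormalCdf (z : ℝ) : HasDerivAt stdNormalCdf (stdNormalPdf z) z := by
  have hcdf : stdNormalCdf = fun t => stdNormalCdf 0 + ∫ x in (0 : ℝ)..t, stdNormalPdf x := by
    funext t
    have := intervalIntegral.integral_Iic_sub_Iic (μ := MeasureTheory.volume) (a := 0) (b := t)
      integrable_stdNormalPdf.integrableOn integrable_stdNormalPdf.integrableOn
    simp only [stdNormalCdf, ← stdNormalPdf.eq_def] at this ⊢
    linarith
  rw [hcdf]
  exact (intervalIntegral.integral_hasDerivAt_right integrable_stdNormalPdf.intervalIntegrable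
    (continuous_stdNormalPdf.stronglyMeasurableAtFilter _ _)
    continuous_stdNormalPdf.continuousAt).const_add _

lemma hasDerivAt_stdNormalPdf (z : ℝ) : HasDerivAt stdNormalPdf (-z * stdNormalPdf z) z := by
  have h := (((hasDerivAt_pow 2 z).neg.div_const 2).exp).const_mul (1 / √(2 * π))
  exact h.congr_deriv (by simp only [stdNormalPdf, Pi.neg_apply]; push_cast; ring)

section Chain

variable {x₁ x₂ x x' : ℝ → ℝ} {x₁' x₂' x'' v φ Cf Cd : ℝ}

lemma hasDerivAt_signed_stdNormalCdf_sub (hφ : φ = 1 ∨ φ = -1)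
    (h₁ : HasDerivAt x₁ x₁' v) (h₂ : HasDerivAt x₂ x₂' v) :
    HasDerivAt (fun w => φ * (Cf * stdNormalCdf (φ * x₁ w) - Cd * stdNormalCdf (φ * x₂ w)))
      (Cf * (stdNormalPdf (x₁ v) * x₁') - Cd * (stdNormalPdf (x₂ v) * x₂')) v := by
  have hN₁ := (hasDerivAt_stdNormalCdf (φ * x₁ v)).comp v (h₁.const_mul φ)
  have hN₂ := (hasDerivAt_stdNormalCdf (φ * x₂ v)).comp v (h₂.const_mul φ)
  refine (((hN₁.const_mul Cf).sub (hN₂.const_mul Cd)).const_mul φ).congr_deriv ?_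
  rcases hφ with rfl | rfl <;>
    simp only [neg_mul, one_mul, stdNormalPdf_neg, mul_neg, sub_neg_eq_add, neg_add_eq_sub, neg_sub]

lemma HasDerivAt.stdNormalPdf_comp_mul (hx : HasDerivAt x (x' v) v) (hx' : HasDerivAt x' x'' v) :
    HasDerivAt (fun w => stdNormalPdf (x w) * x' w)
      (stdNormalPdf (x v) * (x'' - x v * x' v ^ 2)) v :=
  (((hasDerivAt_stdNormalPdf (x v)).comp v hx).mul hx').congr_deriv
    (by rw [Function.comp_apply]; ring)

end Chain

section InvAddMul

variable (a c : ℝ) {v : ℝ}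

lemma hasDerivAt_mul_inv_add_mul (hv : v ≠ 0) :
    HasDerivAt (fun w => a * w⁻¹ + c * w) (c - a * (v ^ 2)⁻¹) v :=
  (((hasDerivAt_inv hv).const_mul a).add ((hasDerivAt_id v).const_mul c)).congr_deriv (by ring)

lemma hasDerivAt_sub_mul_inv_sq (hv : v ≠ 0) :
    HasDerivAt (fun w => c - a * (w ^ 2)⁻¹) (2 * a * (v ^ 3)⁻¹) v := by
  refine ((hasDerivAt_const v c).sub
    (((hasDerivAt_pow 2 v).inv (pow_ne_zero 2 hv)).const_mul a)).congr_deriv ?_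
  field_simp
  ring

lemma hasDerivAt_stdNormalPdf_mul_inv_add_mul (hv : v ≠ 0) :
    HasDerivAt (fun w => stdNormalPdf (a * w⁻¹ + c * w) * (c - a * (w ^ 2)⁻¹))
      (stdNormalPdf (a * v⁻¹ + c * v) *
        (2 * a * (v ^ 3)⁻¹ - (a * v⁻¹ + c * v) * (c - a * (v ^ 2)⁻¹) ^ 2)) v :=
  (hasDerivAt_mul_inv_add_mul a c hv).stdNormalPdf_comp_mul (hasDerivAt_sub_mul_inv_sq a c hv)

end InvAddMul

lemma blackScholes_d₁_eq {T : ℝ} (hT : 0 < T) (L m : ℝ) {v : ℝ} (hv : v ≠ 0) :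
    L / (v * √T) + (1 + (m - v ^ 2 / 2) / v ^ 2) * (v * √T)
      = (L + T * m) / √T * v⁻¹ + √T / 2 * v := by
  have hs : √T ≠ 0 := (sqrt_pos.mpr hT).ne'
  field_simp
  rw [sq_sqrt hT.le]
  ring

lemma blackScholes_d₂_eq {T : ℝ} (hT : 0 < T) (L m : ℝ) {v : ℝ} (hv : v ≠ 0) :
    L / (v * √T) + (1 + (m - v ^ 2 / 2) / v ^ 2) * (v * √T) - v * √T
      = (L + T * m) / √T * v⁻¹ + -(√T / 2) * v := by
  rw [blackScholes_d₁_eq hT L m hv]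
  ring

lemma rpow_three_halves_eq_sqrt_pow {T : ℝ} (hT : 0 ≤ T) : T ^ ((3 : ℝ) / 2) = √T ^ 3 := by
  rw [sqrt_eq_rpow, ← rpow_natCast, ← rpow_mul hT]
  norm_num

theorem volga_A_general (K T S rd rf φ : ℝ) (hT : 0 < T)
    (hφ : φ = 1 ∨ φ = -1) (σ : ℝ) (hσ : 0 < σ) :
    HasDerivAt (deriv (fun v : ℝ =>
        φ * (S * Real.exp (-rf * T) *
            stdNormalCdf (φ * (Real.log (S / K) / (v * Real.sqrt T) +
              (1 + (rd - rf - v ^ 2 / 2) / v ^ 2) * (v * Real.sqrt T))) -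
          K * Real.exp (-rd * T) *
            stdNormalCdf (φ * (Real.log (S / K) / (v * Real.sqrt T) +
              (1 + (rd - rf - v ^ 2 / 2) / v ^ 2) * (v * Real.sqrt T) - v * Real.sqrt T)))))
      (1 / (8 * Real.sqrt (2 * Real.pi) * σ ^ 5 * T ^ ((3 : ℝ) / 2)) *
        (-16 * K * σ ^ 2 * T * (Real.log (S / K) + T * (rd - rf)) *
            Real.exp (-(T * (-2 * rd + 2 * rf + σ ^ 2) - 2 * Real.log (S / K)) ^ 2 /
                (8 * σ ^ 2 * T) - rd * T) +
          16 * σ ^ 2 * S * T * (Real.log (S / K) + T * (rd - rf)) *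
            Real.exp (-(2 * Real.log (S / K) + T * (2 * rd - 2 * rf + σ ^ 2)) ^ 2 /
                (8 * σ ^ 2 * T) - rf * T) +
          K * (2 * Real.log (S / K) + T * (2 * rd - 2 * rf - σ ^ 2)) *
            (2 * Real.log (S / K) + T * (2 * rd - 2 * rf + σ ^ 2)) ^ 2 *
            Real.exp (-(T * (-2 * rd + 2 * rf + σ ^ 2) - 2 * Real.log (S / K)) ^ 2 /
                (8 * σ ^ 2 * T) - rd * T) -
          S * (2 * Real.log (S / K) + T * (2 * rd - 2 * rf - σ ^ 2)) ^ 2 *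
            (2 * Real.log (S / K) + T * (2 * rd - 2 * rf + σ ^ 2)) *
            Real.exp (-(2 * Real.log (S / K) + T * (2 * rd - 2 * rf + σ ^ 2)) ^ 2 /
                (8 * σ ^ 2 * T) - rf * T))) σ := by
  set a := (Real.log (S / K) + T * (rd - rf)) / √T
  set c := √T / 2
  have hvolga := ((hasDerivAt_stdNormalPdf_mul_inv_add_mul a c hσ.ne').const_mul
    (S * exp (-rf * T))).sub
      ((hasDerivAt_stdNormalPdf_mul_inv_add_mul a (-c) hσ.ne').const_mul (K * exp (-rd * T)))
  refine (hvolga.congr_of_eventuallyEq ?_).congr_deriv ?_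
  · filter_upwards [Ioi_mem_nhds hσ] with v hv
    refine (HasDerivAt.congr_of_eventuallyEq (hasDerivAt_signed_stdNormalCdf_sub hφ
      (hasDerivAt_mul_inv_add_mul a c hv.ne') (hasDerivAt_mul_inv_add_mul a (-c) hv.ne')) ?_).deriv
    filter_upwards [Ioi_mem_nhds hv] with w hw
    rw [blackScholes_d₂_eq hT _ _ hw.ne', blackScholes_d₁_eq hT _ _ hw.ne']
  · have hs : 0 < √T := sqrt_pos.mpr hT
    have hexp₁ : -(2 * Real.log (S / K) + T * (2 * rd - 2 * rf + σ ^ 2)) ^ 2 / (8 * σ ^ 2 * T)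
        = -(a * σ⁻¹ + c * σ) ^ 2 / 2 := by
      simp only [a, c]; field_simp; rw [sq_sqrt hT.le]; ring
    have hexp₂ : -(T * (-2 * rd + 2 * rf + σ ^ 2) - 2 * Real.log (S / K)) ^ 2 / (8 * σ ^ 2 * T)
        = -(a * σ⁻¹ + -c * σ) ^ 2 / 2 := by
      simp only [a, c]; field_simp; rw [sq_sqrt hT.le]; ring
    rw [exp_sub, exp_sub, hexp₁, hexp₂, rpow_three_halves_eq_sqrt_pow hT.le]
    simp only [stdNormalPdf, neg_mul rf, neg_mul rd, exp_neg]
    generalize exp (-(a * σ⁻¹ + c * σ) ^ 2 / 2) = E₁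
    generalize exp (-(a * σ⁻¹ + -c * σ) ^ 2 / 2) = E₂
    simp only [a, c]
    field_simp
    rw [sq_sqrt hT.le]
    ring

/-- Volga of the barrier-pricing parameter `𝒜`: the second derivative `∂²𝒜/∂σ²`
exists and is given by the stated closed formula. -/
theorem volga_A (K T S rd rf φ : ℝ) (hK : 0 < K) (hT : 0 < T) (hS : 0 < S)
    (hφ : φ = 1 ∨ φ = -1) (σ : ℝ) (hσ : 0 < σ) :
    HasDerivAt (deriv (fun v : ℝ =>
        φ * (S * Real.exp (-rf * T) *
            stdNormalCdf (φ * (Real.log (S / K) / (v * Real.sqrt T) +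
              (1 + (rd - rf - v ^ 2 / 2) / v ^ 2) * (v * Real.sqrt T))) -
          K * Real.exp (-rd * T) *
            stdNormalCdf (φ * (Real.log (S / K) / (v * Real.sqrt T) +
              (1 + (rd - rf - v ^ 2 / 2) / v ^ 2) * (v * Real.sqrt T) - v * Real.sqrt T)))))
      (1 / (8 * Real.sqrt (2 * Real.pi) * σ ^ 5 * T ^ ((3 : ℝ) / 2)) *
        (-16 * K * σ ^ 2 * T * (Real.log (S / K) + T * (rd - rf)) *
            Real.exp (-(T * (-2 * rd + 2 * rf + σ ^ 2) - 2 * Real.log (S / K)) ^ 2 /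
                (8 * σ ^ 2 * T) - rd * T) +
          16 * σ ^ 2 * S * T * (Real.log (S / K) + T * (rd - rf)) *
            Real.exp (-(2 * Real.log (S / K) + T * (2 * rd - 2 * rf + σ ^ 2)) ^ 2 /
                (8 * σ ^ 2 * T) - rf * T) +
          K * (2 * Real.log (S / K) + T * (2 * rd - 2 * rf - σ ^ 2)) *
            (2 * Real.log (S / K) + T * (2 * rd - 2 * rf + σ ^ 2)) ^ 2 *
            Real.exp (-(T * (-2 * rd + 2 * rf + σ ^ 2) - 2 * Real.log (S / K)) ^ 2 /
                (8 * σ ^ 2 * T) - rd * T) -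
          S * (2 * Real.log (S / K) + T * (2 * rd - 2 * rf - σ ^ 2)) ^ 2 *
            (2 * Real.log (S / K) + T * (2 * rd - 2 * rf + σ ^ 2)) *
            Real.exp (-(2 * Real.log (S / K) + T * (2 * rd - 2 * rf + σ ^ 2)) ^ 2 /
                (8 * σ ^ 2 * T) - rf * T))) σ :=
  volga_A_general K T S rd rf φ hT hφ σ hσ
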